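/- Let m ≥ 1, τ ≥ 2 be integers, n = mτ, and let d_1 ≤ ⋯ ≤ d_n be nonnegative job sizes with block totals M_r = Σ_{i=(r−1)m+1}^{rm} d_i for 1 ≤ r ≤ τ. Assign job i to machine ((i−1) mod m) + 1, so machine j receives the τ jobs e^{(j)}_1 ≤ ⋯ ≤ e^{(j)}_τ with e^{(j)}_s = d_{(s−1)m+j} and total D_j = Σ_s e^{(j)}_s. Let 0 < ε ≤ 1, and for each machine j choose 1 ≤ k_j ≤ τ−1 such that ε^{(j)} := (Σ_{s=1}^{k_j} e^{(j)}_s)/D_j satisfies ε ≤ ε^{(j)} ≤ 1 (assume D_j > 0). Then the total expected social cost of applying the k_j-th Pareto schedule to machine j's jobs, summed over all machines, is at most (1/(4ε) + 1 + ε/4)·Σ_{r=1}^{τ} (τ − r + 1)·M_r; that is, this multiple-machine mechanism has efficacy ratio at most 1/(4ε) + 1 + ε/4. -/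

import Mathlib

open Finset
set_option maxHeartbeats 1000000

lemma finfilter (n : ℕ) (p : ℕ → Prop) [DecidablePred p] (g : ℕ → ℝ) :
    ∑ s ∈ Finset.univ.filter (fun s : Fin n => p s.val), g s.val
      = ∑ i ∈ (Finset.range n).filter p, g i := by
  rw [Finset.sum_filter, Finset.sum_filter, ← Fin.sum_univ_eq_sum_range (fun i => if p i then g i else 0) n]

lemma gaussR (n : ℕ) : ∑ i ∈ Finset.range n, (i : ℝ) = (n : ℝ) * ((n : ℝ) - 1) / 2 := by
  induction n with
  | zero => simp
  | succ n ih => rw [Finset.sum_range_succ, ih]; push_cast; ring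

lemma triR (n : ℕ) (f : ℕ → ℝ) :
    ∑ s ∈ Finset.range n, ∑ ℓ ∈ Finset.range (s + 1), f ℓ
      = ∑ ℓ ∈ Finset.range n, ((n : ℝ) - (ℓ : ℝ)) * f ℓ := by
  induction n with
  | zero => simp
  | succ n ih =>
    rw [Finset.sum_range_succ, ih, Finset.sum_range_succ (fun ℓ => ((↑(n+1) : ℝ) - ↑ℓ) * f ℓ),
      Finset.sum_range_succ f n]
    have : ∑ ℓ ∈ Finset.range n, ((↑(n+1) : ℝ) - ↑ℓ) * f ℓ
        = ∑ ℓ ∈ Finset.range n, (((n : ℝ) - ↑ℓ) * f ℓ + f ℓ) := by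
      apply Finset.sum_congr rfl; intro x hx; push_cast; ring
    rw [this, Finset.sum_add_distrib]
    push_cast; ring

lemma ceil_ineq (a K : ℝ) (q : ℝ) (ha : 0 < a) (hK : 0 ≤ K) (hq1 : K ≤ a * q) (hq2 : a * q ≤ K + a) :
    K ^ 2 ≤ 2 * a * (q * K - a * (q * (q - 1) / 2)) := by
  nlinarith [sq_nonneg (a*q - K), ha, hK]

lemma core_ineq (a K R A B t : ℝ) (ha : 0 < a) (hK : 0 < K) (hR : 0 ≤ R) (ht : 1 ≤ t)
    (hA : K ^ 2 ≤ 2 * a * A) (hB : R + a * t * (t - 1) / 2 ≤ B) :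
    4 * K * ((t + 1) * R / 2 - B) ≤ (K + R) * (A + t * K + B) := by
  have hA0 : 0 ≤ A := by nlinarith
  nlinarith [mul_nonneg hR (sq_nonneg (K - a * (t - 1))),
    mul_le_mul_of_nonneg_left hA hR,
    mul_le_mul_of_nonneg_left hB (le_of_lt hK),
    mul_le_mul_of_nonneg_left hB hR,
    mul_nonneg (mul_nonneg hR ha.le) (sub_nonneg.2 ht),
    mul_nonneg (mul_nonneg (mul_nonneg hR ha.le) ha.le) (mul_nonneg (by linarith : (0:ℝ) ≤ t) (sub_nonneg.2 ht)),
    mul_nonneg (mul_nonneg hK.le ha.le) (mul_nonneg (by linarith : (0:ℝ) ≤ t) (sub_nonneg.2 ht)),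
    mul_nonneg hR hR, mul_pos hK hK, mul_nonneg hK.le hA0, mul_nonneg hR hA0,
    mul_nonneg (mul_nonneg hK.le hK.le) (by linarith : (0:ℝ) ≤ t),
    mul_nonneg (mul_nonneg hR hK.le) (by linarith : (0:ℝ) ≤ t),
    mul_nonneg hR hK.le, mul_pos (mul_pos ha hK) hK]


lemma single_machine (τ kk : ℕ) (e : ℕ → ℝ) (hnn : ∀ i, 0 ≤ e i)
    (hmono : ∀ i j, i ≤ j → j < τ → e i ≤ e j)
    (hk1 : 1 ≤ kk) (hk2 : kk + 1 ≤ τ)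
    (ε : ℝ) (hε0 : 0 < ε)
    (hE : 0 < ∑ s ∈ Finset.range τ, e s)
    (hεlow : ε ≤ (∑ s ∈ Finset.range kk, e s) / ∑ s ∈ Finset.range τ, e s) :
    (∑ s ∈ Finset.range kk, ∑ ℓ ∈ Finset.range (s+1), e ℓ)
      + ∑ s ∈ Finset.Ico kk τ, ((∑ ℓ ∈ Finset.range kk, e ℓ)
          + (((∑ ℓ ∈ Finset.range τ, e ℓ) - ∑ ℓ ∈ Finset.range kk, e ℓ) + e s)/2)
      ≤ (1/(4*ε) + 1 + ε/4) * ∑ s ∈ Finset.range τ, ((τ:ℝ) - (s:ℝ)) * e s := by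
  have hkτ : kk ≤ τ := by omega
  set K : ℝ := ∑ s ∈ Finset.range kk, e s with hKdef
  set E : ℝ := ∑ s ∈ Finset.range τ, e s with hEdef
  set A : ℝ := ∑ s ∈ Finset.range kk, ∑ ℓ ∈ Finset.range (s+1), e ℓ with hAdef
  set OPT : ℝ := ∑ s ∈ Finset.range τ, ((τ:ℝ) - (s:ℝ)) * e s with hOPTdef
  set R : ℝ := ∑ s ∈ Finset.Ico kk τ, e s with hRdef
  set B : ℝ := ∑ s ∈ Finset.Ico kk τ, ((τ:ℝ) - (s:ℝ)) * e s with hBdef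
  clear_value K E A OPT R B
  have hsplit : K + R = E := by
    rw [hKdef, hRdef, hEdef]
    simp only [Finset.range_eq_Ico]
    exact Finset.sum_Ico_consecutive e (Nat.zero_le kk) hkτ
  have hR0 : 0 ≤ R := by rw [hRdef]; exact Finset.sum_nonneg fun i _ => hnn i
  have hεE : ε * E ≤ K := (le_div_iff₀ hE).mp hεlow
  have hKpos : 0 < K := lt_of_lt_of_le (mul_pos hε0 hE) hεE
  set a : ℝ := e (kk - 1) with hadef
  clear_value a
  have hea : ∀ ℓ, ℓ < kk → e ℓ ≤ a := by
    intro ℓ h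
    rw [hadef]
    exact hmono ℓ (kk-1) (by omega) (by omega)
  have hKka : K ≤ (kk : ℝ) * a := by
    rw [hKdef]
    have := Finset.sum_le_card_nsmul (Finset.range kk) e a (fun x hx => hea x (Finset.mem_range.mp hx))
    simpa [Finset.card_range, nsmul_eq_mul] using this
  have ha : 0 < a := by
    by_contra h
    push_neg at h
    nlinarith [mul_nonneg (show (0:ℝ) ≤ (kk:ℝ) from Nat.cast_nonneg kk) (neg_nonneg.mpr h)]
  set t : ℝ := ((τ - kk : ℕ) : ℝ) with htdef
  clear_value t
  have htcast : t = (τ:ℝ) - (kk:ℝ) := by rw [htdef, Nat.cast_sub hkτ]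
  have ht1 : 1 ≤ t := by rw [htdef]; exact_mod_cast Nat.one_le_iff_ne_zero.mpr (by omega)
  -- bound on A
  have hA : K ^ 2 ≤ 2 * a * A := by
    have hP : ∀ s ∈ Finset.range kk,
        max 0 (K - ((kk - 1 - s : ℕ) : ℝ) * a) ≤ ∑ ℓ ∈ Finset.range (s+1), e ℓ := by
      intro s hs
      rw [Finset.mem_range] at hs
      refine max_le (Finset.sum_nonneg fun i _ => hnn i) ?_
      have hcons : (∑ ℓ ∈ Finset.range (s+1), e ℓ) + ∑ ℓ ∈ Finset.Ico (s+1) kk, e ℓ = K := by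
        rw [hKdef]
        simp only [Finset.range_eq_Ico]
        exact Finset.sum_Ico_consecutive e (Nat.zero_le _) (by omega)
      have htail : ∑ ℓ ∈ Finset.Ico (s+1) kk, e ℓ ≤ ((kk - 1 - s : ℕ) : ℝ) * a := by
        have := Finset.sum_le_card_nsmul (Finset.Ico (s+1) kk) e a
          (fun x hx => hea x (Finset.mem_Ico.mp hx).2)
        rw [Nat.card_Ico] at this
        have hcc : kk - (s+1) = kk - 1 - s := by omega
        simpa [hcc, nsmul_eq_mul] using this
      linarith
    have hA1 : ∑ s ∈ Finset.range kk, max 0 (K - ((kk - 1 - s : ℕ) : ℝ) * a) ≤ A :=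
      hAdef ▸ Finset.sum_le_sum hP
    have hrefl : ∑ s ∈ Finset.range kk, max 0 (K - ((kk - 1 - s : ℕ) : ℝ) * a)
        = ∑ i ∈ Finset.range kk, max 0 (K - (i : ℝ) * a) :=
      Finset.sum_range_reflect (fun i => max 0 (K - (i : ℝ) * a)) kk
    set q : ℕ := ⌈K / a⌉₊ with hqdef
    have hqkk : q ≤ kk := Nat.ceil_le.mpr ((div_le_iff₀ ha).mpr (by linarith))
    have hq1 : K ≤ a * q := by
      have := Nat.le_ceil (K / a)
      rw [div_le_iff₀ ha] at this
      linarith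
    have hq2 : a * q ≤ K + a := by
      have h2 : (q : ℝ) < K / a + 1 :=
        Nat.ceil_lt_add_one (show (0:ℝ) ≤ K / a from le_of_lt (div_pos hKpos ha))
      have h2' : a * (q:ℝ) < a * (K / a + 1) := mul_lt_mul_of_pos_left h2 ha
      have h2'' : a * (K / a + 1) = K + a := by field_simp
      linarith
    have hsub : ∑ i ∈ Finset.range q, max 0 (K - (i : ℝ) * a)
        ≤ ∑ i ∈ Finset.range kk, max 0 (K - (i : ℝ) * a) :=
      Finset.sum_le_sum_of_subset_of_nonneg (Finset.range_subset_range.mpr hqkk)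
        (fun i _ _ => le_max_left 0 _)
    have hlb : ∑ i ∈ Finset.range q, (K - (i : ℝ) * a)
        ≤ ∑ i ∈ Finset.range q, max 0 (K - (i : ℝ) * a) :=
      Finset.sum_le_sum (fun i _ => le_max_right _ _)
    have hval : ∑ i ∈ Finset.range q, (K - (i : ℝ) * a)
        = (q : ℝ) * K - a * ((q : ℝ) * ((q : ℝ) - 1) / 2) := by
      rw [Finset.sum_sub_distrib, Finset.sum_const, Finset.card_range, ← Finset.sum_mul, gaussR]
      simp [nsmul_eq_mul]; ring
    have hci := ceil_ineq a K q ha hKpos.le hq1 hq2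
    nlinarith [hA1, hrefl, hsub, hlb, hval, hci, ha]
  -- bound on B
  have hB : R + a * t * (t - 1) / 2 ≤ B := by
    have hterm : ∀ s ∈ Finset.Ico kk τ, e s + ((τ:ℝ) - 1 - (s:ℝ)) * a ≤ ((τ:ℝ) - (s:ℝ)) * e s := by
      intro s hs
      rw [Finset.mem_Ico] at hs
      have h1 : a ≤ e s := by rw [hadef]; exact hmono (kk-1) s (by omega) hs.2
      have h2 : (0:ℝ) ≤ (τ:ℝ) - 1 - (s:ℝ) := by
        have h3 : ((s:ℝ)) + 1 ≤ (τ:ℝ) := by exact_mod_cast Nat.succ_le_of_lt hs.2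
        linarith
      nlinarith [mul_le_mul_of_nonneg_left h1 h2]
    have hsum := Finset.sum_le_sum hterm
    rw [Finset.sum_add_distrib] at hsum
    have hgauss : ∑ s ∈ Finset.Ico kk τ, ((τ:ℝ) - 1 - (s:ℝ)) = t * (t - 1) / 2 := by
      rw [Finset.sum_Ico_eq_sum_range]
      have hcg : ∀ i ∈ Finset.range (τ - kk), ((τ:ℝ) - 1 - ((kk + i : ℕ):ℝ)) = (t - 1) - (i:ℝ) := by
        intro i _
        rw [htcast]; push_cast; ring
      rw [Finset.sum_congr rfl hcg, Finset.sum_sub_distrib, Finset.sum_const, Finset.card_range,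
        gaussR]
      simp only [nsmul_eq_mul]
      rw [← htdef]
      ring
    have hgsum : ∑ s ∈ Finset.Ico kk τ, ((τ:ℝ) - 1 - (s:ℝ)) * a = (t * (t-1) / 2) * a := by
      rw [← Finset.sum_mul, hgauss]
    rw [hgsum, ← hRdef, ← hBdef] at hsum
    linarith
  -- OPT decomposition
  have hOPTeq : OPT = A + t * K + B := by
    have hsplit2 : OPT = (∑ s ∈ Finset.range kk, ((τ:ℝ) - (s:ℝ)) * e s) + B := by
      rw [hOPTdef, hBdef]
      simp only [Finset.range_eq_Ico]
      rw [← Finset.sum_Ico_consecutive (fun s => ((τ:ℝ) - (s:ℝ)) * e s) (Nat.zero_le kk) hkτ]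
    have h2 : ∑ s ∈ Finset.range kk, ((τ:ℝ) - (s:ℝ)) * e s
        = ∑ s ∈ Finset.range kk, (((kk:ℝ) - (s:ℝ)) * e s + t * e s) := by
      apply Finset.sum_congr rfl
      intro s _
      rw [htcast]; ring
    rw [hsplit2, h2, Finset.sum_add_distrib, ← Finset.mul_sum, ← hKdef, ← triR, ← hAdef]
  have hOPT0 : 0 ≤ OPT := by
    rw [hOPTdef]
    apply Finset.sum_nonneg
    intro s hs
    rw [Finset.mem_range] at hs
    have : (s:ℝ) ≤ (τ:ℝ) := by exact_mod_cast Nat.le_of_lt hs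
    exact mul_nonneg (by linarith) (hnn s)
  -- LHS computation
  have hC : ∑ s ∈ Finset.Ico kk τ, (K + ((E - K) + e s)/2) = t * K + t * R / 2 + R / 2 := by
    have hEK : E - K = R := by linarith
    have h1 : ∀ s ∈ Finset.Ico kk τ, K + ((E - K) + e s)/2 = (K + R/2) + e s / 2 := by
      intro s _; rw [hEK]; ring
    rw [Finset.sum_congr rfl h1, Finset.sum_add_distrib, Finset.sum_const, Nat.card_Ico,
      ← Finset.sum_div, ← hRdef, nsmul_eq_mul, ← htdef]
    ring
  rw [hC]
  -- final chain
  have hcore := core_ineq a K R A B t ha hKpos hR0 ht1 hA hB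
  have h3 : (t+1) * R / 2 - B ≤ (K + R) * OPT / (4 * K) := by
    rw [le_div_iff₀ (by positivity), hOPTeq]
    nlinarith [hcore]
  have h2'' : ε * (K + R) ≤ K := by rw [hsplit]; exact hεE
  have h4 : (K + R) * OPT / (4 * K) ≤ OPT / (4 * ε) := by
    rw [div_le_div_iff₀ (by positivity) (by positivity)]
    nlinarith [mul_le_mul_of_nonneg_right h2'' hOPT0, hOPT0, hKpos]
  have h5 : 0 ≤ ε / 4 * OPT := mul_nonneg (by positivity) hOPT0
  have hexp : (1/(4*ε) + 1 + ε/4) * OPT = OPT / (4*ε) + OPT + ε/4 * OPT := by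
    field_simp
  linarith [h3, h4, h5, hOPTeq, hexp]


/-- The index (in the sorted list of all `n = mτ` jobs) of the `s`-th job of machine
`j` under the round-robin assignment: machine `j` receives the jobs
`e^{(j)}_s = d_{s·m + j}` (0-indexed), one from each block. -/
def rrIdx (m τ : ℕ) (j : Fin m) (s : Fin τ) : Fin (m * τ) :=
  ⟨(s : ℕ) * m + (j : ℕ), by
    have h1 : (s : ℕ) + 1 ≤ τ := s.isLt
    have h2 : (j : ℕ) < m := j.isLt
    calc (s : ℕ) * m + (j : ℕ) < ((s : ℕ) + 1) * m := by
          rw [Nat.add_mul, Nat.one_mul]; omega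
    _ ≤ τ * m := Nat.mul_le_mul_right m h1
    _ = m * τ := Nat.mul_comm τ m⟩

/-- `n = mτ` sorted nonnegative jobs; machine `j` receives the sorted
jobs `e^{(j)}_s = d (rrIdx m τ j s)` with total `D_j > 0`; indices `1 ≤ k_j ≤ τ - 1`
are chosen so that `ε ≤ ε^{(j)} = (∑_{s < k_j} e^{(j)}_s)/D_j ≤ 1` (for a given
`0 < ε ≤ 1`).  Then the total expected social cost of applying the `k_j`-th Pareto
schedule on each machine `j` is at most `(1/(4ε) + 1 + ε/4)` times the optimal
multimachine cost `∑_r (τ - r + 1) M_r` (0-indexed: `(τ - r) M_r`): this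
multiple-machine mechanism has efficacy ratio at most `1/(4ε) + 1 + ε/4`. -/
theorem multi_machine_efficacy (m τ : ℕ) (hm : 1 ≤ m) (hτ : 2 ≤ τ)
    (d : Fin (m * τ) → ℝ) (hnn : ∀ i, 0 ≤ d i) (hmono : Monotone d)
    (ε : ℝ) (hε0 : 0 < ε) (hε1 : ε ≤ 1)
    (k : Fin m → ℕ) (hk1 : ∀ j, 1 ≤ k j) (hk2 : ∀ j, k j ≤ τ - 1)
    (hDpos : ∀ j : Fin m, 0 < ∑ s : Fin τ, d (rrIdx m τ j s))
    (hεlow : ∀ j : Fin m,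
      ε ≤ (∑ s ∈ Finset.univ.filter (fun s : Fin τ => (s : ℕ) < k j), d (rrIdx m τ j s)) /
        (∑ s : Fin τ, d (rrIdx m τ j s)))
    (hεhigh : ∀ j : Fin m,
      (∑ s ∈ Finset.univ.filter (fun s : Fin τ => (s : ℕ) < k j), d (rrIdx m τ j s)) /
        (∑ s : Fin τ, d (rrIdx m τ j s)) ≤ 1) :
    ∑ j : Fin m,
      ((∑ s ∈ Finset.univ.filter (fun s : Fin τ => (s : ℕ) < k j),
          ∑ ℓ ∈ Finset.univ.filter (fun ℓ : Fin τ => ℓ ≤ s), d (rrIdx m τ j ℓ))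
        + ∑ s ∈ Finset.univ.filter (fun s : Fin τ => ¬ (s : ℕ) < k j),
            ((∑ ℓ ∈ Finset.univ.filter (fun ℓ : Fin τ => (ℓ : ℕ) < k j), d (rrIdx m τ j ℓ)) +
              (((∑ ℓ : Fin τ, d (rrIdx m τ j ℓ)) -
                ∑ ℓ ∈ Finset.univ.filter (fun ℓ : Fin τ => (ℓ : ℕ) < k j), d (rrIdx m τ j ℓ)) +
                d (rrIdx m τ j s)) / 2))
      ≤ (1 / (4 * ε) + 1 + ε / 4) *
        ∑ r : Fin τ, ((τ : ℝ) - ((r : ℕ) : ℝ)) *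
          ∑ i ∈ Finset.univ.filter
            (fun i : Fin (m * τ) =>
              (r : ℕ) * m ≤ (i : ℕ) ∧ (i : ℕ) < ((r : ℕ) + 1) * m), d i := by
  classical
  have hm0 : 0 < m := hm
  set ejf : Fin m → ℕ → ℝ := fun j v => if h : v < τ then d (rrIdx m τ j ⟨v, h⟩) else 0 with hejf
  have hej : ∀ (j : Fin m) (s : Fin τ), d (rrIdx m τ j s) = ejf j s.val := by
    intro j s
    simp only [hejf, s.isLt, dif_pos]
  -- conversions
  have hEconv : ∀ j : Fin m, ∑ s : Fin τ, d (rrIdx m τ j s) = ∑ v ∈ Finset.range τ, ejf j v := by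
    intro j
    rw [Finset.sum_congr rfl (fun s _ => hej j s)]
    exact Fin.sum_univ_eq_sum_range (ejf j) τ
  have hKconv : ∀ j : Fin m,
      (∑ s ∈ Finset.univ.filter (fun s : Fin τ => (s : ℕ) < k j), d (rrIdx m τ j s))
        = ∑ v ∈ Finset.range (k j), ejf j v := by
    intro j
    have hkj := hk2 j
    rw [Finset.sum_congr rfl (fun s _ => hej j s), finfilter τ (fun v => v < k j) (ejf j)]
    congr 1
    ext v
    simp only [Finset.mem_filter, Finset.mem_range]
    omega
  -- per-machine nonnegativity and monotonicity
  have hnn' : ∀ (j : Fin m) (i : ℕ), 0 ≤ ejf j i := by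
    intro j i
    by_cases h : i < τ
    · simp only [hejf, dif_pos h]; exact hnn _
    · simp only [hejf, dif_neg h]; exact le_refl 0
  have hmono' : ∀ (j : Fin m) (i i' : ℕ), i ≤ i' → i' < τ → ejf j i ≤ ejf j i' := by
    intro j i i' hii hi'
    have hi : i < τ := by omega
    simp only [hejf, dif_pos hi, dif_pos hi']
    apply hmono
    rw [Fin.le_def]
    show i * m + (j:ℕ) ≤ i' * m + (j:ℕ)
    exact Nat.add_le_add_right (Nat.mul_le_mul_right m hii) _
  -- inner sum conversion
  have hinner : ∀ (j : Fin m) (s : Fin τ),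
      (∑ ℓ ∈ Finset.univ.filter (fun ℓ : Fin τ => ℓ ≤ s), d (rrIdx m τ j ℓ))
        = ∑ ℓ ∈ Finset.range (s.val + 1), ejf j ℓ := by
    intro j s
    rw [Finset.sum_congr (Finset.filter_congr (fun x _ => Fin.le_def)) (fun ℓ _ => hej j ℓ),
      finfilter τ (fun v => v ≤ s.val) (ejf j)]
    congr 1
    ext v
    simp only [Finset.mem_filter, Finset.mem_range]
    have := s.isLt
    omega
  -- per machine bound
  have hmain : ∀ j : Fin m,
      ((∑ s ∈ Finset.univ.filter (fun s : Fin τ => (s : ℕ) < k j),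
          ∑ ℓ ∈ Finset.univ.filter (fun ℓ : Fin τ => ℓ ≤ s), d (rrIdx m τ j ℓ))
        + ∑ s ∈ Finset.univ.filter (fun s : Fin τ => ¬ (s : ℕ) < k j),
            ((∑ ℓ ∈ Finset.univ.filter (fun ℓ : Fin τ => (ℓ : ℕ) < k j), d (rrIdx m τ j ℓ)) +
              (((∑ ℓ : Fin τ, d (rrIdx m τ j ℓ)) -
                ∑ ℓ ∈ Finset.univ.filter (fun ℓ : Fin τ => (ℓ : ℕ) < k j), d (rrIdx m τ j ℓ)) +
                d (rrIdx m τ j s)) / 2))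
      ≤ (1 / (4 * ε) + 1 + ε / 4) * ∑ v ∈ Finset.range τ, ((τ:ℝ) - (v:ℝ)) * ejf j v := by
    intro j
    have hkj1 := hk1 j
    have hkj2 := hk2 j
    have hE' : 0 < ∑ v ∈ Finset.range τ, ejf j v := by
      rw [← hEconv j]; exact hDpos j
    have hεlow' : ε ≤ (∑ v ∈ Finset.range (k j), ejf j v) / ∑ v ∈ Finset.range τ, ejf j v := by
      have h := hεlow j
      rwa [hKconv j, hEconv j] at h
    have hsingle := single_machine τ (k j) (ejf j) (hnn' j) (hmono' j) hkj1 (by omega) ε hε0 hE' hεlow'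
    -- rewrite LHS to range form
    have hterm1 :
        (∑ s ∈ Finset.univ.filter (fun s : Fin τ => (s : ℕ) < k j),
          ∑ ℓ ∈ Finset.univ.filter (fun ℓ : Fin τ => ℓ ≤ s), d (rrIdx m τ j ℓ))
        = ∑ v ∈ Finset.range (k j), ∑ ℓ ∈ Finset.range (v + 1), ejf j ℓ := by
      rw [Finset.sum_congr rfl (fun s _ => hinner j s),
        finfilter τ (fun v => v < k j) (fun v => ∑ ℓ ∈ Finset.range (v + 1), ejf j ℓ)]
      congr 1
      ext v
      simp only [Finset.mem_filter, Finset.mem_range]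
      omega
    have hterm2 :
        (∑ s ∈ Finset.univ.filter (fun s : Fin τ => ¬ (s : ℕ) < k j),
            ((∑ ℓ ∈ Finset.univ.filter (fun ℓ : Fin τ => (ℓ : ℕ) < k j), d (rrIdx m τ j ℓ)) +
              (((∑ ℓ : Fin τ, d (rrIdx m τ j ℓ)) -
                ∑ ℓ ∈ Finset.univ.filter (fun ℓ : Fin τ => (ℓ : ℕ) < k j), d (rrIdx m τ j ℓ)) +
                d (rrIdx m τ j s)) / 2))
        = ∑ v ∈ Finset.Ico (k j) τ, ((∑ ℓ ∈ Finset.range (k j), ejf j ℓ) +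
            (((∑ ℓ ∈ Finset.range τ, ejf j ℓ) - ∑ ℓ ∈ Finset.range (k j), ejf j ℓ) +
              ejf j v) / 2) := by
      rw [Finset.sum_congr rfl (fun s _ => by rw [hej j s, hKconv j, hEconv j]),
        finfilter τ (fun v => ¬ v < k j)
          (fun v => (∑ ℓ ∈ Finset.range (k j), ejf j ℓ) +
            (((∑ ℓ ∈ Finset.range τ, ejf j ℓ) - ∑ ℓ ∈ Finset.range (k j), ejf j ℓ) +
              ejf j v) / 2)]
      congr 1
      ext v
      simp only [Finset.mem_filter, Finset.mem_range, Finset.mem_Ico]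
      omega
    rw [hterm1, hterm2]
    exact hsingle
  -- block identity
  have hblock : ∀ r : Fin τ,
      (∑ i ∈ Finset.univ.filter
          (fun i : Fin (m * τ) => (r : ℕ) * m ≤ (i : ℕ) ∧ (i : ℕ) < ((r : ℕ) + 1) * m), d i)
        = ∑ j : Fin m, d (rrIdx m τ j r) := by
    intro r
    have hmem2 : ∀ j : Fin m, rrIdx m τ j r ∈ Finset.univ.filter
        (fun i : Fin (m * τ) => (r : ℕ) * m ≤ (i : ℕ) ∧ (i : ℕ) < ((r : ℕ) + 1) * m) := by
      intro j
      rw [Finset.mem_filter]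
      refine ⟨Finset.mem_univ _, Nat.le_add_right _ _, ?_⟩
      show (r : ℕ) * m + (j : ℕ) < ((r : ℕ) + 1) * m
      rw [Nat.add_mul, Nat.one_mul]
      exact Nat.add_lt_add_left j.isLt _
    refine Finset.sum_nbij' (fun i => (⟨((i : ℕ) - (r : ℕ) * m) % m, Nat.mod_lt _ hm0⟩ : Fin m))
      (fun j => rrIdx m τ j r) (fun i _ => Finset.mem_univ _) (fun j _ => hmem2 j) ?_ ?_ ?_
    · intro i hi
      rw [Finset.mem_filter] at hi
      obtain ⟨-, h1, h2⟩ := hi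
      rw [Nat.add_mul, Nat.one_mul] at h2
      apply Fin.ext
      show (r : ℕ) * m + ((i : ℕ) - (r : ℕ) * m) % m = (i : ℕ)
      rw [Nat.mod_eq_of_lt (by omega)]
      omega
    · intro j _
      apply Fin.ext
      show ((r : ℕ) * m + (j : ℕ) - (r : ℕ) * m) % m = (j : ℕ)
      rw [Nat.add_sub_cancel_left, Nat.mod_eq_of_lt j.isLt]
    · intro i hi
      rw [Finset.mem_filter] at hi
      obtain ⟨-, h1, h2⟩ := hi
      rw [Nat.add_mul, Nat.one_mul] at h2
      congr 1
      apply Fin.ext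
      show (i : ℕ) = (r : ℕ) * m + ((i : ℕ) - (r : ℕ) * m) % m
      rw [Nat.mod_eq_of_lt (by omega)]
      omega
  -- RHS identity
  have hRHS : ∑ r : Fin τ, ((τ : ℝ) - ((r : ℕ) : ℝ)) *
        (∑ i ∈ Finset.univ.filter
          (fun i : Fin (m * τ) => (r : ℕ) * m ≤ (i : ℕ) ∧ (i : ℕ) < ((r : ℕ) + 1) * m), d i)
      = ∑ j : Fin m, ∑ v ∈ Finset.range τ, ((τ:ℝ) - (v:ℝ)) * ejf j v := by
    rw [Finset.sum_congr rfl (fun r _ => by rw [hblock r])]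
    simp only [Finset.mul_sum]
    rw [Finset.sum_comm]
    apply Finset.sum_congr rfl
    intro j _
    rw [Finset.sum_congr rfl (fun r (_ : r ∈ Finset.univ) => by rw [hej j r])]
    exact Fin.sum_univ_eq_sum_range (fun v => ((τ:ℝ) - (v:ℝ)) * ejf j v) τ
  calc ∑ j : Fin m, _ ≤ ∑ j : Fin m,
        (1 / (4 * ε) + 1 + ε / 4) * ∑ v ∈ Finset.range τ, ((τ:ℝ) - (v:ℝ)) * ejf j v :=
      Finset.sum_le_sum (fun j _ => hmain j)
    _ = (1 / (4 * ε) + 1 + ε / 4) *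
        ∑ j : Fin m, ∑ v ∈ Finset.range τ, ((τ:ℝ) - (v:ℝ)) * ejf j v := by
      rw [Finset.mul_sum]
    _ = _ := by rw [← hRHS]
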